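/- arXiv:1807.00291 — 4 statements merged into one kernel-verified Lean document; each statement's English description precedes it below -/
import Mathlib

section
/- Let R be a commutative noetherian ring with total quotient ring Q, and let M be an R-submodule of Q containing a non-zerodivisor of R. Then the trace ideal tr_R(M) equals (R : M)·M, the R-submodule of Q generated by products xy with x ∈ R : M and y ∈ M. -/
universe u

open nonZeroDivisors

/-- The trace ideal of an `R`-module `M`. -/
def traceIdeal (R : Type*) [CommRing R] (M : Type*) [AddCommGroup M] [Module R M] :
    Ideal R :=
  Submodule.span R {r | ∃ (f : M →ₗ[R] R) (m : M), f m = r}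

/-!
A linear form `f : M → R` on a submodule `M` of `Q` satisfies `f x * y = f y * x` in `Q`:
clearing denominators `x = a / s`, `y = b / t` gives `(t * a) • y = (s * b) • x` inside `M`.
So if `M` contains a unit `c` of `Q`, then `f` is multiplication by `f c / c ∈ R : M`.
Conversely, multiplication by any `q ∈ R : M` is a linear form on `M`, since `R ⊆ Q`.
Hence `Hom_R(M, R) = R : M`, and the trace is `(R : M) · M`.
-/

section

variable {R Q : Type*} [CommRing R] [CommRing Q] [Algebra R Q]

theorem algebraMap_apply_mul_comm (S : Submonoid R) [IsLocalization S Q] {M : Submodule R Q}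
    (f : M →ₗ[R] R) (x y : M) :
    algebraMap R Q (f x) * y = algebraMap R Q (f y) * x := by
  obtain ⟨⟨a, s⟩, hx⟩ := IsLocalization.surj S (x : Q)
  obtain ⟨⟨b, t⟩, hy⟩ := IsLocalization.surj S (y : Q)
  have hM : ((t : R) * a) • y = ((s : R) * b) • x := by
    apply Subtype.ext
    simp only [SetLike.val_smul, Algebra.smul_def, map_mul, ← hx, ← hy]
    ring
  have hR := congrArg (algebraMap R Q ∘ f) hM
  simp only [Function.comp_apply, map_smul, smul_eq_mul, map_mul] at hR
  refine (IsLocalization.map_units Q (s * t)).mul_left_cancel ?_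
  simp only [Submonoid.coe_mul, map_mul]
  linear_combination
    algebraMap R Q s * algebraMap R Q (f x) * hy - algebraMap R Q t * algebraMap R Q (f y) * hx
      - hR

variable [IsFractionRing R Q] {M : Submodule R Q}

theorem exists_mem_one_div_forall_algebraMap_apply_eq_mul
    (hM : ∃ c ∈ R⁰, algebraMap R Q c ∈ M) (f : M →ₗ[R] R) :
    ∃ q ∈ 1 / M, ∀ m : M, algebraMap R Q (f m) = q * m := by
  obtain ⟨c, hc, hcM⟩ := hM
  obtain ⟨u, hu⟩ := IsLocalization.map_units Q (⟨c, hc⟩ : R⁰)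
  have hcu : ((⟨_, hcM⟩ : M) : Q) = u := hu.symm
  have hf (m : M) : algebraMap R Q (f m) = algebraMap R Q (f ⟨_, hcM⟩) * ↑u⁻¹ * m := by
    rw [mul_right_comm, ← algebraMap_apply_mul_comm R⁰ f, mul_assoc, hcu, Units.mul_inv, mul_one]
  refine ⟨algebraMap R Q (f ⟨_, hcM⟩) * ↑u⁻¹, ?_, hf⟩
  rw [Submodule.mem_div_iff_forall_mul_mem]
  intro y hy
  exact Submodule.mem_one.mpr ⟨f ⟨y, hy⟩, hf ⟨y, hy⟩⟩

theorem exists_linearMap_algebraMap_apply_eq_mul {q : Q} (hq : q ∈ 1 / M) :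
    ∃ f : M →ₗ[R] R, ∀ m : M, algebraMap R Q (f m) = q * m := by
  have hrange (m : M) : q * m ∈ LinearMap.range (Algebra.linearMap R Q) := by
    rw [← Submodule.one_eq_range]
    exact Submodule.mem_div_iff_forall_mul_mem.mp hq m m.2
  let e := LinearEquiv.ofInjective (Algebra.linearMap R Q) (IsFractionRing.injective R Q)
  refine ⟨e.symm.toLinearMap ∘ₗ
    ((LinearMap.mulLeft R q ∘ₗ M.subtype).codRestrict _ hrange), fun m ↦ ?_⟩
  exact congrArg Subtype.val (e.apply_symm_apply ⟨q * m, hrange m⟩)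

end

/-- `R` is encoded as `1 : Submodule R Q` and the colon `R : M` as `1 / M`. -/
theorem trace_eq_colon_mul_general (R : Type u) [CommRing R]
    (M : Submodule R (FractionRing R))
    (h : ∃ c ∈ R⁰, algebraMap R (FractionRing R) c ∈ M) :
    Submodule.map (Algebra.linearMap R (FractionRing R)) (traceIdeal R M) =
      (1 / M) * M := by
  apply le_antisymm
  · rw [traceIdeal, Submodule.map_span, Submodule.span_le]
    rintro _ ⟨_, ⟨f, m, rfl⟩, rfl⟩
    obtain ⟨q, hq, hf⟩ := exists_mem_one_div_forall_algebraMap_apply_eq_mul h f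
    rw [Algebra.linearMap_apply, hf]
    exact Submodule.mul_mem_mul hq m.2
  · rw [Submodule.mul_le]
    intro q hq m hm
    obtain ⟨f, hf⟩ := exists_linearMap_algebraMap_apply_eq_mul hq
    exact ⟨f ⟨m, hm⟩, Submodule.subset_span ⟨f, _, rfl⟩, hf _⟩

/-- For a submodule `M` of the total quotient ring containing a non-zerodivisor,
`tr_R(M) = (R : M) · M` as submodules of `Q`.  Here `R` corresponds to
`1 : Submodule R Q` and `(R : M) = 1 / M`. -/
theorem trace_eq_colon_mul (R : Type u) [CommRing R] [IsNoetherianRing R]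
    (M : Submodule R (FractionRing R))
    (h : ∃ c ∈ R⁰, algebraMap R (FractionRing R) c ∈ M) :
    Submodule.map (Algebra.linearMap R (FractionRing R)) (traceIdeal R M) =
      (1 / M) * M :=
  trace_eq_colon_mul_general R M h
end

section
/- Let R be a commutative noetherian ring satisfying the Lindo–Pande condition (every ideal of R is isomorphic as an R-module to a trace ideal of R). Then the Picard group of R is trivial, i.e., every invertible R-module is isomorphic to R. -/
universe u

/-- An ideal is a trace ideal if it is the trace of some module. -/
def IsTraceIdeal {R : Type u} [CommRing R] (I : Ideal R) : Prop :=
  ∃ (M : Type u) (_ : AddCommGroup M) (_ : Module R M), I = traceIdeal R M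

/-- The Lindo–Pande condition: every ideal is isomorphic to a trace ideal. -/
def LP (R : Type u) [CommRing R] : Prop :=
  ∀ I : Ideal R, ∃ J : Ideal R, IsTraceIdeal J ∧ Nonempty (I ≃ₗ[R] J)

/-- An invertible module: finitely generated and locally free of rank one at every prime. -/
def IsInvertibleModule (R : Type u) [CommRing R] (M : Type u) [AddCommGroup M]
    [Module R M] : Prop :=
  Module.Finite R M ∧ ∀ (p : Ideal R) [p.IsPrime],
    Nonempty (LocalizedModule p.primeCompl M ≃ₗ[Localization p.primeCompl]
      Localization p.primeCompl)
/-!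
Localizing at a maximal ideal, where `M` becomes free of rank one, shows that the trace ideal of
`M` is all of `R` and that any two functionals satisfy `φ x * ψ y = φ y * ψ x`. Together with
projectivity this makes the contraction `Mᵛ ⊗ M → R` bijective, so `M` is `Module.Invertible`
and hence, `R` being noetherian, isomorphic to an ideal `I`. The Lindo–Pande condition gives
`I ≅ J` with `J` a trace ideal, and then `R = tr M = tr J ≤ J`, so `J = R` and `M ≅ R`.
-/

open Module

variable {R : Type*} [CommRing R] {M : Type*} [AddCommGroup M] [Module R M]

section TraceIdeal

lemma traceIdeal_le_of_surjective {N : Type*} [AddCommGroup N] [Module R N] (π : N →ₗ[R] M)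
    (hπ : Function.Surjective π) : traceIdeal R M ≤ traceIdeal R N :=
  Submodule.span_le.mpr fun _ ⟨f, m, hfm⟩ => by
    obtain ⟨n, rfl⟩ := hπ m
    exact Submodule.subset_span ⟨f ∘ₗ π, n, hfm⟩

lemma traceIdeal_congr {N : Type*} [AddCommGroup N] [Module R N] (e : M ≃ₗ[R] N) :
    traceIdeal R M = traceIdeal R N :=
  le_antisymm (traceIdeal_le_of_surjective e.symm.toLinearMap e.symm.surjective)
    (traceIdeal_le_of_surjective e.toLinearMap e.surjective)

lemma apply_mem_traceIdeal (g : Dual R (traceIdeal R M)) (y : traceIdeal R M) :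
    g y ∈ traceIdeal R M := by
  obtain ⟨y, hy⟩ := y
  induction hy using Submodule.span_induction with
  | mem _ h =>
    obtain ⟨f, m, rfl⟩ := h
    exact Submodule.subset_span
      ⟨g ∘ₗ f.codRestrict _ fun m => Submodule.subset_span ⟨f, m, rfl⟩, m, rfl⟩
  | zero =>
    rw [show (⟨0, _⟩ : traceIdeal R M) = 0 from rfl, map_zero]
    exact zero_mem _
  | add a b ha hb hga hgb =>
    rw [show (⟨a + b, _⟩ : traceIdeal R M) = ⟨a, ha⟩ + ⟨b, hb⟩ from rfl, map_add]
    exact add_mem hga hgb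
  | smul r a ha hga =>
    rw [show (⟨r • a, _⟩ : traceIdeal R M) = r • ⟨a, ha⟩ from rfl, map_smul]
    exact Submodule.smul_mem _ r hga

lemma traceIdeal_traceIdeal_le : traceIdeal R (traceIdeal R M) ≤ traceIdeal R M :=
  Submodule.span_le.mpr fun _ ⟨g, y, hgy⟩ => hgy ▸ apply_mem_traceIdeal g y

lemma IsTraceIdeal.traceIdeal_le {R : Type u} [CommRing R] {J : Ideal R} (hJ : IsTraceIdeal J) :
    traceIdeal R J ≤ J := by
  obtain ⟨N, _, _, rfl⟩ := hJ
  exact traceIdeal_traceIdeal_le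

open TensorProduct in
lemma traceIdeal_le_range_contractLeft :
    traceIdeal R M ≤ LinearMap.range (contractLeft R M) :=
  Submodule.span_le.mpr fun _ ⟨f, m, hfm⟩ => ⟨f ⊗ₜ m, hfm⟩

end TraceIdeal

section LocallyFreeOfRankOne

def IsLocallyFreeOfRankOne (R : Type*) [CommRing R] (M : Type*) [AddCommGroup M] [Module R M] :
    Prop :=
  ∀ (P : Ideal R) [P.IsMaximal], Nonempty
    (LocalizedModule P.primeCompl M ≃ₗ[Localization P.primeCompl] Localization P.primeCompl)

lemma exists_algebraMap_apply_eq_mul (S : Submonoid R)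
    (e : LocalizedModule S M ≃ₗ[Localization S] Localization S) (φ : Dual R M) :
    ∃ b : Localization S, ∀ x : M,
      algebraMap R (Localization S) (φ x) = e (LocalizedModule.mk x 1) * b := by
  let φS := IsLocalizedModule.mapExtendScalars S (LocalizedModule.mkLinearMap S M)
    (Algebra.linearMap R (Localization S)) (Localization S) φ
  refine ⟨φS (e.symm 1), fun x => ?_⟩
  calc algebraMap R (Localization S) (φ x) = φS (LocalizedModule.mk x 1) :=
        (IsLocalizedModule.map_apply S (LocalizedModule.mkLinearMap S M)
          (Algebra.linearMap R _) φ x).symm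
    _ = φS (e (LocalizedModule.mk x 1) • e.symm 1) := by
        rw [← map_smul, smul_eq_mul, mul_one, e.symm_apply_apply]
    _ = e (LocalizedModule.mk x 1) * φS (e.symm 1) := by rw [map_smul, smul_eq_mul]

namespace IsLocallyFreeOfRankOne

lemma apply_mul_apply_comm (hM : IsLocallyFreeOfRankOne R M) (φ ψ : Dual R M) (x y : M) :
    φ x * ψ y = φ y * ψ x := by
  refine Module.eq_of_localization_maximal (fun P _ => Localization P.primeCompl)
    (fun P _ => Algebra.linearMap R _) _ _ fun P _ => ?_
  obtain ⟨e⟩ := hM P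
  obtain ⟨a, ha⟩ := exists_algebraMap_apply_eq_mul P.primeCompl e φ
  obtain ⟨b, hb⟩ := exists_algebraMap_apply_eq_mul P.primeCompl e ψ
  simp only [Algebra.linearMap_apply, map_mul, ha, hb]
  ring

lemma apply_smul_comm (hM : IsLocallyFreeOfRankOne R M) (φ ψ : Dual R M) (x : M) :
    φ x • ψ = ψ x • φ :=
  LinearMap.ext fun y => by simpa [mul_comm] using hM.apply_mul_apply_comm φ ψ x y

lemma projective (hM : IsLocallyFreeOfRankOne R M) [FinitePresentation R M] : Projective R M :=
  Module.projective_of_localization_maximal fun P _ => .of_equiv (hM P).some.symm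

lemma traceIdeal_eq_top (hM : IsLocallyFreeOfRankOne R M) [FinitePresentation R M] :
    traceIdeal R M = ⊤ := by
  by_contra hne
  obtain ⟨P, hP, hle⟩ := Ideal.exists_le_maximal _ hne
  obtain ⟨e⟩ := hM P
  -- A global functional lifting `e` takes a value outside `P` at a preimage of `1`.
  obtain ⟨φ, s, hφ⟩ := FinitePresentation.exists_lift_of_isLocalizedModule P.primeCompl
    (Algebra.linearMap R (Localization P.primeCompl))
    (e.toLinearMap.restrictScalars R ∘ₗ LocalizedModule.mkLinearMap _ M)
  obtain ⟨⟨x, t⟩, hx⟩ := IsLocalizedModule.mk'_surjective P.primeCompl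
    (LocalizedModule.mkLinearMap _ M) (e.symm 1)
  simp only [Function.uncurry_apply_pair] at hx
  have hex : e (LocalizedModule.mk x 1) = algebraMap R _ t := by
    rw [← LocalizedModule.mkLinearMap_apply, ← IsLocalizedModule.mk'_cancel' _ x t, hx,
      Submonoid.smul_def, ← algebraMap_smul (Localization P.primeCompl) (t : R), map_smul,
      e.apply_symm_apply, smul_eq_mul, mul_one]
  have hφx : algebraMap R (Localization P.primeCompl) (φ x) = algebraMap R _ (s * t) := by
    have := LinearMap.congr_fun hφ x
    simp only [LinearMap.comp_apply, Algebra.linearMap_apply, LinearMap.smul_apply] at this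
    rw [this, LinearMap.restrictScalars_apply, LinearEquiv.coe_coe,
      LocalizedModule.mkLinearMap_apply, hex, Submonoid.smul_def, Algebra.smul_def, map_mul]
  have hunit : IsUnit (algebraMap R (Localization P.primeCompl) (φ x)) := by
    rw [hφx]
    exact IsLocalization.map_units _ (s * t)
  exact (IsLocalization.AtPrime.isUnit_to_map_iff _ P _).mp hunit
    (hle (Submodule.subset_span ⟨φ, x, rfl⟩))

open TensorProduct LinearMap in
lemma invertible (hM : IsLocallyFreeOfRankOne R M) [FinitePresentation R M] :
    Module.Invertible R M := by
  have := hM.projective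
  obtain ⟨t₀, ht₀⟩ := traceIdeal_le_range_contractLeft
    (hM.traceIdeal_eq_top ▸ Submodule.mem_top : (1 : R) ∈ _)
  -- For `t₀ = ∑ fᵢ ⊗ xᵢ` with `∑ fᵢ xᵢ = 1`, `evalLeft y t₀ = ∑ fᵢ y • xᵢ = y`,
  -- so `r ↦ r • t₀` inverts the contraction.
  let evalLeft (y : M) : Dual R M ⊗[R] M →ₗ[R] M :=
    TensorProduct.lid R M ∘ₗ rTensor M (Dual.eval R M y)
  have hψ (ψ : Dual R M) (y : M) : ψ ∘ₗ evalLeft y = ψ y • contractLeft R M := by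
    refine TensorProduct.ext' fun F x => ?_
    simp [evalLeft, hM.apply_mul_apply_comm F ψ y x, mul_comm]
  have hf (f : Dual R M) (y : M) :
      TensorProduct.mk R _ M f ∘ₗ evalLeft y = f y • LinearMap.id := by
    refine TensorProduct.ext' fun F x => ?_
    simp [evalLeft, smul_tmul', hM.apply_smul_comm F f y]
  have hevalLeft (y : M) : evalLeft y t₀ = y := by
    rw [← sub_eq_zero, ← forall_dual_apply_eq_zero_iff R]
    intro ψ
    simp [← LinearMap.comp_apply ψ, hψ, ht₀]
  have hinv : toSpanSingleton R _ t₀ ∘ₗ contractLeft R M = LinearMap.id := by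
    refine TensorProduct.ext' fun f y => ?_
    simpa [hevalLeft] using (LinearMap.congr_fun (hf f y) t₀).symm
  exact ⟨⟨Function.LeftInverse.injective (g := toSpanSingleton R _ t₀) (LinearMap.congr_fun hinv),
    Function.RightInverse.surjective (g := toSpanSingleton R _ t₀) fun r => by simp [ht₀]⟩⟩

end IsLocallyFreeOfRankOne

end LocallyFreeOfRankOne

/-- If `R` satisfies the Lindo–Pande condition, then the Picard group of `R` is trivial:
every invertible module is free of rank one. -/
theorem picard_trivial_of_LP (R : Type u) [CommRing R] [IsNoetherianRing R] (h : LP R)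
    (M : Type u) [AddCommGroup M] [Module R M] (hM : IsInvertibleModule R M) :
    Nonempty (M ≃ₗ[R] R) := by
  obtain ⟨_, hloc⟩ := hM
  have := Module.finitePresentation_of_finite R M
  have hlocal : IsLocallyFreeOfRankOne R M := fun P _ => hloc P
  have := hlocal.invertible
  obtain ⟨I, ⟨eI⟩⟩ := Module.Invertible.exists_linearEquiv_ideal R M
  obtain ⟨J, hJ, ⟨eJ⟩⟩ := h I
  have hJ_top : J = ⊤ := top_le_iff.mp <| calc
    ⊤ = traceIdeal R M := hlocal.traceIdeal_eq_top.symm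
    _ = traceIdeal R J := traceIdeal_congr (eI.trans eJ)
    _ ≤ J := hJ.traceIdeal_le
  exact ⟨eI.trans eJ |>.trans (.ofEq _ _ hJ_top) |>.trans Submodule.topEquiv⟩
end

section
/- Let R be a commutative noetherian ring with total quotient ring Q, let I be a reflexive ideal of R containing a non-zerodivisor of R, and set S = (I : I), the colon taken in Q. If I = tr_R(I), then I = tr_R(S). Moreover, if additionally S ≅ tr_R(S) as R-modules, then I ≅ S as S-modules. -/
/-!
An `R`-linear map from a submodule of `Q` containing a non-zerodivisor `c` to `Q` is
multiplication by `g c / c`. So every functional on `S = I : I` is multiplication by some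
`b ∈ R :_Q S`, and every functional on `I` is multiplication by an element of `R : I`, which lies
in `S` because `tr_R(I) = I`. The products of `b` with the latter multipliers form an element of
`Hom(Hom(I, R), R)`; reflexivity realises it by an element of `I`, which is `b`. Hence
`tr_R(S) ⊆ S I ⊆ I`, while `a ∈ I` is the value at `1` of the functional `s ↦ a s` on `S`.
Finally, an `R`-isomorphism `I ≅ S` is multiplication by an element of `Q`, hence `S`-linear.
-/

universe u

open nonZeroDivisors

section Multipliers

variable {R K : Type*} [CommRing R] [CommRing K] [Algebra R K]

theorem Submodule.exists_mul_eq_of_algebraMap_mem {S : Submonoid R} [IsLocalization S K]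
    (M : Submodule R K) {c : R} (hc : c ∈ S) (hcM : algebraMap R K c ∈ M) (g : M →ₗ[R] K) :
    ∃ u : K, ∀ x : M, g x = u * x := by
  refine ⟨g ⟨_, hcM⟩ * IsLocalization.mk' K 1 ⟨c, hc⟩, fun x => ?_⟩
  obtain ⟨⟨a, b⟩, hab⟩ := IsLocalization.surj S (x : K)
  -- With `x = a / b`, compare `c • (b • x) = a • c` inside `M`.
  have hcross : c • ((b : R) • x) = a • (⟨_, hcM⟩ : M) := by
    ext
    simp only [SetLike.val_smul, Algebra.smul_def]
    rw [← hab]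
    ring
  have hg := congrArg g hcross
  simp only [map_smul, Algebra.smul_def] at hg
  have hb : algebraMap R K c * g x = x * g ⟨_, hcM⟩ := by
    apply (IsLocalization.map_units K b).mul_left_cancel
    linear_combination hg - g ⟨_, hcM⟩ * hab
  have hinv := IsLocalization.mk'_spec K (1 : R) ⟨c, hc⟩
  rw [map_one] at hinv
  linear_combination IsLocalization.mk' K (1 : R) ⟨c, hc⟩ * hb - g x * hinv

theorem Submodule.linearMap_apply_mul_of_mem_div {S : Submonoid R} [IsLocalization S K]
    {M N : Submodule R K} {c : R} (hc : c ∈ S) (hcM : algebraMap R K c ∈ M) (e : M →ₗ[R] N)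
    {s x : K} (hs : s ∈ M / M) (hx : x ∈ M) :
    (e ⟨s * x, Submodule.mem_div_iff_forall_mul_mem.mp hs x hx⟩ : K) = s * e ⟨x, hx⟩ := by
  obtain ⟨u, hu⟩ := M.exists_mul_eq_of_algebraMap_mem hc hcM (N.subtype ∘ₗ e)
  simp only [LinearMap.comp_apply, Submodule.subtype_apply] at hu
  rw [hu, hu]
  ring

variable [FaithfulSMul R K]

noncomputable def LinearMap.codRestrictOne {N : Type*} [AddCommGroup N] [Module R N]
    (g : N →ₗ[R] K) (hg : ∀ n, g n ∈ (1 : Submodule R K)) : N →ₗ[R] R :=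
  (LinearEquiv.ofInjective (Algebra.linearMap R K)
      (FaithfulSMul.algebraMap_injective R K)).symm.toLinearMap ∘ₗ
    g.codRestrict _ (by rwa [← Submodule.one_eq_range])

@[simp]
theorem LinearMap.algebraMap_codRestrictOne {N : Type*} [AddCommGroup N] [Module R N]
    (g : N →ₗ[R] K) (hg : ∀ n, g n ∈ (1 : Submodule R K)) (n : N) :
    algebraMap R K (g.codRestrictOne hg n) = g n :=
  congrArg Subtype.val ((LinearEquiv.ofInjective (Algebra.linearMap R K)
    (FaithfulSMul.algebraMap_injective R K)).apply_symm_apply _)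

end Multipliers

section ReflexiveIdeal

variable {R K : Type*} [CommRing R] [CommRing K] [Algebra R K] {I : Ideal R}

theorem Ideal.mul_dual_apply_comm (f : Module.Dual R I) (a c : I) :
    (c : R) * f a = a * f c := by
  simpa only [map_smul, smul_eq_mul] using
    congrArg f (show (c : R) • a = (a : R) • c from Subtype.ext (mul_comm _ _))

theorem algebraMap_mem_map_iff [FaithfulSMul R K] {r : R} :
    algebraMap R K r ∈ Submodule.map (Algebra.linearMap R K) I ↔ r ∈ I :=
  (FaithfulSMul.algebraMap_injective R K).mem_set_image

theorem le_traceIdeal_colon [FaithfulSMul R K] :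
    I ≤ traceIdeal R ↥(Submodule.map (Algebra.linearMap R K) I /
      Submodule.map (Algebra.linearMap R K) I) := by
  set J := Submodule.map (Algebra.linearMap R K) I
  intro a ha
  let f := (LinearMap.mulLeft R (algebraMap R K a) ∘ₗ (J / J).subtype).codRestrictOne
    fun s => (LinearMap.map_le_range.trans_eq Submodule.one_eq_range.symm) (by
      rw [LinearMap.comp_apply, LinearMap.mulLeft_apply, Submodule.subtype_apply, mul_comm]
      exact Submodule.mem_div_iff_forall_mul_mem.mp s.2 _ (algebraMap_mem_map_iff.mpr ha))
  refine Submodule.subset_span ⟨f, ⟨1, Submodule.one_mem_div.mpr le_rfl⟩, ?_⟩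
  apply FaithfulSMul.algebraMap_injective R K
  simp [f]

variable [IsFractionRing R K] [Module.IsReflexive R I]

theorem Ideal.mem_of_algebraMap_mem_one_div_colon (htr : traceIdeal R I = I) {c : R}
    (hc : c ∈ R⁰) (hcI : c ∈ I) {b : R}
    (hb : algebraMap R K b ∈ 1 / (Submodule.map (Algebra.linearMap R K) I /
      Submodule.map (Algebra.linearMap R K) I)) : b ∈ I := by
  set J := Submodule.map (Algebra.linearMap R K) I
  set v := IsLocalization.mk' K (1 : R) ⟨c, hc⟩
  have hv : v * algebraMap R K c = 1 := by
    simpa only [map_one] using IsLocalization.mk'_spec K (1 : R) ⟨c, hc⟩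
  -- A functional `f` on `I` is multiplication by `f c / c`, which maps `I` into `tr I = I`.
  have hmul : ∀ f : Module.Dual R I, algebraMap R K (f ⟨c, hcI⟩) * v ∈ J / J := by
    intro f
    refine Submodule.mem_div_iff_forall_mul_mem.mpr ?_
    rintro _ ⟨a, ha, rfl⟩
    have hcomm := congrArg (algebraMap R K) (Ideal.mul_dual_apply_comm f ⟨a, ha⟩ ⟨c, hcI⟩)
    simp only [map_mul] at hcomm
    have hfa : algebraMap R K (f ⟨c, hcI⟩) * v * algebraMap R K a
        = algebraMap R K (f ⟨a, ha⟩) := by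
      linear_combination v * hcomm.symm + algebraMap R K (f ⟨a, ha⟩) * hv
    rw [Algebra.linearMap_apply, hfa, algebraMap_mem_map_iff]
    exact htr.le (Submodule.subset_span ⟨f, _, rfl⟩)
  -- `b` times these multipliers is the double-dual element that reflexivity realises in `I`.
  let Φ : Module.Dual R (Module.Dual R I) :=
    (LinearMap.mulLeft R (algebraMap R K b * v) ∘ₗ Algebra.linearMap R K ∘ₗ
      Module.Dual.eval R I ⟨c, hcI⟩).codRestrictOne fun f => by
        simpa only [LinearMap.comp_apply, LinearMap.mulLeft_apply, Algebra.linearMap_apply,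
          Module.Dual.eval_apply, mul_assoc, mul_comm v] using
          Submodule.mem_div_iff_forall_mul_mem.mp hb _ (hmul f)
  obtain ⟨a, ha⟩ := (Module.bijective_dual_eval R I).surjective Φ
  have hab : algebraMap R K a = algebraMap R K b := by
    have h := congrArg (fun φ => algebraMap R K (φ I.subtype)) ha
    simp only [Module.Dual.eval_apply, Submodule.subtype_apply, Φ,
      LinearMap.algebraMap_codRestrictOne, LinearMap.comp_apply, LinearMap.mulLeft_apply,
      Algebra.linearMap_apply] at h
    linear_combination h + algebraMap R K b * hv
  exact IsFractionRing.injective R K hab ▸ a.2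

theorem traceIdeal_colon_le (htr : traceIdeal R I = I) {c : R} (hc : c ∈ R⁰) (hcI : c ∈ I) :
    traceIdeal R ↥(Submodule.map (Algebra.linearMap R K) I /
      Submodule.map (Algebra.linearMap R K) I) ≤ I := by
  set J := Submodule.map (Algebra.linearMap R K) I
  refine Submodule.span_le.mpr ?_
  rintro _ ⟨f, m, rfl⟩
  have h1 : (1 : K) ∈ J / J := Submodule.one_mem_div.mpr le_rfl
  obtain ⟨u, hu⟩ := (J / J).exists_mul_eq_of_algebraMap_mem (one_mem R⁰)
    (by rwa [map_one]) (Algebra.linearMap R K ∘ₗ f)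
  simp only [LinearMap.comp_apply, Algebra.linearMap_apply] at hu
  have hf : ∀ s : ↥(J / J), algebraMap R K (f s) = s * algebraMap R K (f ⟨1, h1⟩) := by
    intro s
    rw [hu, hu ⟨1, h1⟩, mul_one, mul_comm]
  have hb : f ⟨1, h1⟩ ∈ I := Ideal.mem_of_algebraMap_mem_one_div_colon (K := K) htr hc hcI
    (Submodule.mem_div_iff_forall_mul_mem.mpr fun s hs => by
      rw [mul_comm, ← hf ⟨s, hs⟩]
      exact Submodule.mem_one.mpr ⟨_, rfl⟩)
  rw [SetLike.mem_coe, ← algebraMap_mem_map_iff (K := K), hf]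
  exact Submodule.mem_div_iff_forall_mul_mem.mp m.2 _ (algebraMap_mem_map_iff.mpr hb)

end ReflexiveIdeal

theorem reflexive_trace_endomorphism_ring_general (R : Type u) [CommRing R]
    (I : Ideal R) (href : Module.IsReflexive R I) (hnzd : ∃ c ∈ R⁰, c ∈ I)
    (htr : traceIdeal R I = I) :
    traceIdeal R
      ((Submodule.map (Algebra.linearMap R (FractionRing R)) I) /
        (Submodule.map (Algebra.linearMap R (FractionRing R)) I) :
          Submodule R (FractionRing R)) = I ∧
    (Nonempty
        ((((Submodule.map (Algebra.linearMap R (FractionRing R)) I) /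
            (Submodule.map (Algebra.linearMap R (FractionRing R)) I) :
              Submodule R (FractionRing R))) ≃ₗ[R]
          (traceIdeal R
            ((Submodule.map (Algebra.linearMap R (FractionRing R)) I) /
              (Submodule.map (Algebra.linearMap R (FractionRing R)) I) :
                Submodule R (FractionRing R)))) →
      ∃ e : (Submodule.map (Algebra.linearMap R (FractionRing R)) I) ≃ₗ[R]
          (((Submodule.map (Algebra.linearMap R (FractionRing R)) I) /
            (Submodule.map (Algebra.linearMap R (FractionRing R)) I) :
              Submodule R (FractionRing R))),
        ∀ (s x : FractionRing R)
          (hs : s ∈ ((Submodule.map (Algebra.linearMap R (FractionRing R)) I) /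
            (Submodule.map (Algebra.linearMap R (FractionRing R)) I) :
              Submodule R (FractionRing R)))
          (hx : x ∈ Submodule.map (Algebra.linearMap R (FractionRing R)) I),
          (e ⟨s * x, Submodule.mem_div_iff_forall_mul_mem.mp hs x hx⟩ : FractionRing R) =
            s * (e ⟨x, hx⟩ : FractionRing R)) := by
  obtain ⟨c, hc, hcI⟩ := hnzd
  have htrS := le_antisymm (traceIdeal_colon_le htr hc hcI)
    (le_traceIdeal_colon (K := FractionRing R))
  refine ⟨htrS, fun ⟨φ⟩ => ?_⟩
  let e := ((Submodule.equivMapOfInjective (Algebra.linearMap R (FractionRing R))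
    (FaithfulSMul.algebraMap_injective R (FractionRing R)) I).symm ≪≫ₗ
      LinearEquiv.ofEq _ _ htrS.symm) ≪≫ₗ φ.symm
  exact ⟨e, fun s x hs hx => Submodule.linearMap_apply_mul_of_mem_div hc
    (algebraMap_mem_map_iff.mpr hcI) e.toLinearMap hs hx⟩

/-- Lemma 3.5: let `I` be a reflexive ideal containing a non-zerodivisor with
`I = tr_R(I)`, and let `S = I : I` (colon in the total quotient ring `Q`).  Then
`I = tr_R(S)`; moreover if `S ≅ tr_R(S)` as `R`-modules then `I ≅ S` as `S`-modules
(an `R`-isomorphism commuting with multiplication by elements of `S`). -/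
theorem reflexive_trace_endomorphism_ring (R : Type u) [CommRing R] [IsNoetherianRing R]
    (I : Ideal R) (href : Module.IsReflexive R I) (hnzd : ∃ c ∈ R⁰, c ∈ I)
    (htr : traceIdeal R I = I) :
    traceIdeal R
      ((Submodule.map (Algebra.linearMap R (FractionRing R)) I) /
        (Submodule.map (Algebra.linearMap R (FractionRing R)) I) :
          Submodule R (FractionRing R)) = I ∧
    (Nonempty
        ((((Submodule.map (Algebra.linearMap R (FractionRing R)) I) /
            (Submodule.map (Algebra.linearMap R (FractionRing R)) I) :
              Submodule R (FractionRing R))) ≃ₗ[R]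
          (traceIdeal R
            ((Submodule.map (Algebra.linearMap R (FractionRing R)) I) /
              (Submodule.map (Algebra.linearMap R (FractionRing R)) I) :
                Submodule R (FractionRing R)))) →
      ∃ e : (Submodule.map (Algebra.linearMap R (FractionRing R)) I) ≃ₗ[R]
          (((Submodule.map (Algebra.linearMap R (FractionRing R)) I) /
            (Submodule.map (Algebra.linearMap R (FractionRing R)) I) :
              Submodule R (FractionRing R))),
        ∀ (s x : FractionRing R)
          (hs : s ∈ ((Submodule.map (Algebra.linearMap R (FractionRing R)) I) /
            (Submodule.map (Algebra.linearMap R (FractionRing R)) I) :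
              Submodule R (FractionRing R)))
          (hx : x ∈ Submodule.map (Algebra.linearMap R (FractionRing R)) I),
          (e ⟨s * x, Submodule.mem_div_iff_forall_mul_mem.mp hs x hx⟩ : FractionRing R) =
            s * (e ⟨x, hx⟩ : FractionRing R)) :=
  reflexive_trace_endomorphism_ring_general R I href hnzd htr
end

section
/- A commutative noetherian normal domain R satisfies the Lindo–Pande condition (every ideal of R is isomorphic to a trace ideal) if and only if R is a unique factorization domain. -/
universe u

/-! A trace ideal `J` is mapped into itself by every `f : J →ₗ[R] R`. Over a normal domain, with
`J ≠ ⊥` finitely generated, this forces each such `f` to be multiplication by an element of `R`: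
if `w ∣ c * z` for all `z ∈ J`, then `c / w` stabilises `J`, so it is integral over `R`, hence
in `R`. Given `e : I ≃ₗ[R] J`, the map `e⁻¹` is therefore multiplication by some `c`, and `(c)` is
the smallest principal ideal containing `I`; for `I = (a) ⊓ (b)` this puts `c` in `I`, so
`I = (c)`. Hence lcms exist, `R` is a GCD domain and, being noetherian, a UFD.

Conversely, in a UFD every ideal is `g • J` with `J` generated by elements of gcd `1`, and every
`f : J →ₗ[R] R` is multiplication by an element of `R`, so `J` is its own trace ideal. -/

section CommRing

variable {R : Type u} [CommRing R]

theorem Ideal.mul_apply_comm {I : Ideal R} (f : I →ₗ[R] R) {x y : R} (hx : x ∈ I) (hy : y ∈ I) :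
    x * f ⟨y, hy⟩ = y * f ⟨x, hx⟩ := by
  simpa only [map_smul, smul_eq_mul] using
    congrArg f (Subtype.ext (mul_comm x y) : x • (⟨y, hy⟩ : I) = y • ⟨x, hx⟩)

theorem isTraceIdeal_iff {J : Ideal R} : IsTraceIdeal J ↔ ∀ (f : J →ₗ[R] R) (z : J), f z ∈ J := by
  constructor
  · rintro ⟨M, _, _, rfl⟩ f z
    suffices ⊤ ≤ Submodule.comap f (traceIdeal R M) from this Submodule.mem_top
    refine Submodule.span_span_coe_preimage.symm.le.trans (Submodule.span_le.mpr ?_)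
    rintro ⟨_, _⟩ ⟨g, m, rfl⟩
    exact Submodule.subset_span
      ⟨f ∘ₗ g.codRestrict _ fun m ↦ Submodule.subset_span ⟨g, m, rfl⟩, m, rfl⟩
  · intro h
    refine ⟨J, inferInstance, inferInstance, le_antisymm ?_ ?_⟩
    · exact fun z hz ↦ Submodule.subset_span ⟨J.subtype, ⟨z, hz⟩, rfl⟩
    · exact Submodule.span_le.mpr fun _ ⟨f, z, hfz⟩ ↦ hfz ▸ h f z

theorem isTraceIdeal_bot : IsTraceIdeal (⊥ : Ideal R) :=
  isTraceIdeal_iff.mpr fun f z ↦ by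
    rw [Subsingleton.elim z 0, map_zero]
    exact Submodule.zero_mem _

end CommRing

section IsDomain

variable {R : Type u} [CommRing R] [IsDomain R]

theorem Ideal.exists_apply_eq_mul_of_dvd {J : Ideal R} (f : J →ₗ[R] R) {z₀ : R} (hz₀ : z₀ ∈ J)
    (hz₀_ne : z₀ ≠ 0) (hdvd : z₀ ∣ f ⟨z₀, hz₀⟩) : ∃ c : R, ∀ z : J, f z = c * z := by
  obtain ⟨c, hc⟩ := hdvd
  refine ⟨c, fun z ↦ mul_left_cancel₀ hz₀_ne ?_⟩
  calc z₀ * f z = z * f ⟨z₀, hz₀⟩ := J.mul_apply_comm f hz₀ z.2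
    _ = z₀ * (c * z) := by rw [hc]; ring

noncomputable def Ideal.spanEquivSpanMul {g : R} (hg : g ≠ 0) (T : Set R) :
    Ideal.span T ≃ₗ[R] Ideal.span ((g * ·) '' T) :=
  (Submodule.equivMapOfInjective (LinearMap.mulLeft R g) (mul_right_injective₀ hg) _).trans
    (LinearEquiv.ofEq _ _ (Submodule.map_span _ _))

theorem isTraceIdeal_span_image_of_gcd_eq_one [NormalizedGCDMonoid R] {ι : Type*}
    (s : Finset ι) (v : ι → R) (hv : s.gcd v = 1) : IsTraceIdeal (Ideal.span (v '' s)) := by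
  rw [isTraceIdeal_iff]
  intro f
  have hmem : ∀ i ∈ s, v i ∈ Ideal.span (v '' s) := fun i hi ↦ Ideal.subset_span ⟨i, hi, rfl⟩
  obtain ⟨i₀, hi₀, hv₀⟩ : ∃ i ∈ s, v i ≠ 0 := by
    by_contra! h
    simp [Finset.gcd_eq_zero_iff.mpr h] at hv
  -- `v i₀ ∣ v i₀ * f (v i) = v i * f (v i₀)` for all `i`, and their gcd is `f (v i₀)` up to a unit.
  have hdvd : v i₀ ∣ f ⟨v i₀, hmem i₀ hi₀⟩ := by
    have hgcd : v i₀ ∣ s.gcd fun i ↦ v i * f ⟨v i₀, hmem i₀ hi₀⟩ := Finset.dvd_gcd fun i hi ↦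
      ⟨f ⟨v i, hmem i hi⟩, (Ideal.mul_apply_comm f (hmem i₀ hi₀) (hmem i hi)).symm⟩
    simpa [hv] using hgcd.trans (Finset.gcd_mul_right' s v _).dvd
  obtain ⟨c, hc⟩ := Ideal.exists_apply_eq_mul_of_dvd f (hmem i₀ hi₀) hv₀ hdvd
  exact fun z ↦ hc z ▸ Ideal.mul_mem_left _ c z.2

end IsDomain

section IsIntegrallyClosed

variable {R : Type u} [CommRing R] [IsDomain R] [IsIntegrallyClosed R] {J : Ideal R}

theorem IsTraceIdeal.dvd_of_forall_dvd_mul (hJ : IsTraceIdeal J) (hfg : J.FG) (hJ0 : J ≠ ⊥)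
    {c w : R} (hw : w ≠ 0) (hdvd : ∀ z ∈ J, w ∣ c * z) : w ∣ c := by
  let φ := algebraMap R (FractionRing R)
  have φinj : Function.Injective φ := IsFractionRing.injective R (FractionRing R)
  have φw : φ w ≠ 0 := (map_ne_zero_iff φ φinj).mpr hw
  let h : J →ₗ[R] R := (LinearEquiv.toSpanNonzeroSingleton R R w hw).symm ∘ₗ
    (c • J.subtype).codRestrict _ fun z ↦ Ideal.mem_span_singleton.mpr (hdvd z z.2)
  have hh : ∀ z : J, h z * w = c * z := fun z ↦ congrArg Subtype.val
    (LinearEquiv.apply_symm_apply (LinearEquiv.toSpanNonzeroSingleton R R w hw) _)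
  have hint : IsIntegral R (φ c / φ w) := by
    refine isIntegral_of_smul_mem_submodule (A := FractionRing R) (M := FractionRing R)
      (Submodule.map (Algebra.linearMap R (FractionRing R)) J) ?_ (Submodule.FG.map _ hfg)
      (φ c / φ w) ?_
    · rwa [Ne, ← Submodule.map_bot (Algebra.linearMap R (FractionRing R)),
        (Submodule.map_injective_of_injective φinj).eq_iff]
    · rintro _ ⟨z, hz, rfl⟩
      refine ⟨h ⟨z, hz⟩, isTraceIdeal_iff.mp hJ h _, ?_⟩
      simp only [Algebra.linearMap_apply, smul_eq_mul]
      field_simp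
      rw [← map_mul, ← map_mul, hh]
  obtain ⟨v, hv⟩ := IsIntegrallyClosed.isIntegral_iff.mp hint
  refine ⟨v, φinj ?_⟩
  rw [map_mul, hv]
  field_simp

theorem IsTraceIdeal.exists_apply_eq_mul (hJ : IsTraceIdeal J) (hfg : J.FG) (f : J →ₗ[R] R) :
    ∃ c : R, ∀ z : J, f z = c * z := by
  by_cases hJ0 : J = ⊥
  · subst hJ0
    exact ⟨0, fun z ↦ by rw [Subsingleton.elim z 0, map_zero, Submodule.coe_zero, mul_zero]⟩
  obtain ⟨z₀, hz₀, hz₀_ne⟩ := Submodule.exists_mem_ne_zero_of_ne_bot hJ0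
  refine Ideal.exists_apply_eq_mul_of_dvd f hz₀ hz₀_ne
    (hJ.dvd_of_forall_dvd_mul hfg hJ0 hz₀_ne fun z hz ↦ ?_)
  exact ⟨f ⟨z, hz⟩, by rw [mul_comm, J.mul_apply_comm f hz₀ hz]⟩

end IsIntegrallyClosed

theorem lp_of_uniqueFactorizationMonoid {R : Type u} [CommRing R] [IsDomain R]
    [IsNoetherianRing R] [UniqueFactorizationMonoid R] : LP R := by
  classical
  let _ := UniqueFactorizationMonoid.strongNormalizationMonoid (α := R)
  let _ := UniqueFactorizationMonoid.toNormalizedGCDMonoid R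
  intro I
  obtain ⟨s, rfl⟩ := IsNoetherian.noetherian I
  by_cases hg : s.gcd id = 0
  · rw [Submodule.span_eq_bot.mpr fun x hx ↦ Finset.gcd_eq_zero_iff.mp hg x hx]
    exact ⟨⊥, isTraceIdeal_bot, ⟨LinearEquiv.refl R _⟩⟩
  obtain ⟨v, hv, hv1⟩ := Finset.extract_gcd id
    (s.eq_empty_or_nonempty.resolve_left (by rintro rfl; exact hg Finset.gcd_empty))
  have hspan : (s.gcd id * ·) '' (v '' s) = s :=
    (Set.image_image ..).trans ((Set.image_congr fun x hx ↦ (hv x hx).symm).trans (Set.image_id _))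
  exact ⟨_, isTraceIdeal_span_image_of_gcd_eq_one s v hv1,
    ⟨(LinearEquiv.ofEq _ _ (by rw [hspan])).trans (Ideal.spanEquivSpanMul hg _).symm⟩⟩

theorem LP.exists_inf_span_singleton_eq {R : Type u} [CommRing R] [IsDomain R]
    [IsNoetherianRing R] [IsIntegrallyClosed R] (hLP : LP R) (a b : R) :
    ∃ c : R, Ideal.span {a} ⊓ Ideal.span {b} = Ideal.span {c} := by
  by_cases hab : a * b = 0
  · refine ⟨0, ?_⟩
    rcases mul_eq_zero.mp hab with rfl | rfl <;> simp
  set I := Ideal.span {a} ⊓ Ideal.span {b}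
  obtain ⟨J, hJ, ⟨e⟩⟩ := hLP I
  have habI : a * b ∈ I := ⟨Ideal.mem_span_singleton.mpr (dvd_mul_right a b),
    Ideal.mem_span_singleton.mpr (dvd_mul_left b a)⟩
  have hJ0 : J ≠ ⊥ := J.ne_bot_iff.mpr ⟨e ⟨a * b, habI⟩, (e _).2, by simpa using hab⟩
  have hfg : J.FG := IsNoetherian.noetherian J
  obtain ⟨c, hc⟩ := hJ.exists_apply_eq_mul hfg (I.subtype ∘ₗ e.symm.toLinearMap)
  have hdvd : ∀ w ≠ 0, I ≤ Ideal.span {w} → w ∣ c := fun w hw hIw ↦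
    hJ.dvd_of_forall_dvd_mul hfg hJ0 hw fun z hz ↦
      Ideal.mem_span_singleton.mp (hc ⟨z, hz⟩ ▸ hIw (e.symm ⟨z, hz⟩).2)
  refine ⟨c, le_antisymm (fun x hx ↦ ?_) ?_⟩
  · exact Ideal.mem_span_singleton.mpr ⟨e ⟨x, hx⟩, by simpa using hc (e ⟨x, hx⟩)⟩
  · rw [Ideal.span_singleton_le_iff_mem]
    exact ⟨Ideal.mem_span_singleton.mpr (hdvd a (left_ne_zero_of_mul hab) inf_le_left),
      Ideal.mem_span_singleton.mpr (hdvd b (right_ne_zero_of_mul hab) inf_le_right)⟩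

/-- A noetherian normal domain satisfies the Lindo–Pande condition iff it is a UFD. -/
theorem normal_domain_LP_iff_ufd (R : Type u) [CommRing R] [IsDomain R]
    [IsNoetherianRing R] [IsIntegrallyClosed R] :
    LP R ↔ UniqueFactorizationMonoid R := by
  refine ⟨fun hLP ↦ ?_, fun _ ↦ lp_of_uniqueFactorizationMonoid⟩
  classical
  let _ : GCDMonoid R := gcdMonoidOfExistsLCM fun a b ↦ by
    obtain ⟨c, hc⟩ := hLP.exists_inf_span_singleton_eq a b
    refine ⟨c, fun d ↦ ?_⟩
    simpa only [Submodule.mem_inf, Ideal.mem_span_singleton] using SetLike.ext_iff.mp hc d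
  exact ufm_of_decomposition_of_wfDvdMonoid
end
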